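/- arXiv:1209.6338 — 4 statements merged into one kernel-verified Lean document; each statement's English description precedes it below -/
import Mathlib

section
/- As Λ → +∞, B_Λ⁰ = (2/(3π)) ln Λ - 5/(9π) + (2/(3π)) ln 2 + O(Λ⁻²). In particular B_Λ⁰ - (2/(3π)) ln Λ converges to (2 ln 2)/(3π) - 5/(9π). -/
open Real Filter

/-- The constant `B_Λ⁰ = (1/π) ∫₀^{Λ/√(1+Λ²)} (z² - z⁴/3)/(1 - z²) dz`. -/
noncomputable def BLambda (Λ : ℝ) : ℝ :=
  (1 / π) * ∫ z in (0 : ℝ)..(Λ / Real.sqrt (1 + Λ ^ 2)), (z ^ 2 - z ^ 4 / 3) / (1 - z ^ 2)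

/-!
Since `(z² - z⁴/3)/(1 - z²) = z²/3 - 2/3 + (2/3)/(1 - z²)`, the integral up to `t` is
`t³/9 - 2t/3 + (2/3) artanh t`. The upper limit `t = Λ/√(1+Λ²)` is `tanh (arsinh Λ)`, so
`B_Λ⁰ = π⁻¹ (t³/9 - 2t/3 + (2/3) arsinh Λ)` exactly. Finally
`t³/9 - 2t/3 + 5/9 = (1-t)(5-t-t²)/9`, and both `1 - t` and `arsinh Λ - log (2Λ)` are `O(Λ⁻²)`
because `√(1+Λ²) - Λ = 1/(√(1+Λ²) + Λ)`.
-/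

open Set Topology

namespace Real

theorem artanh_div_sqrt_one_add_sq (x : ℝ) : artanh (x / √(1 + x ^ 2)) = arsinh x := by
  rw [← tanh_arsinh, artanh_tanh]

theorem div_sqrt_one_add_sq_mem_Ioo (x : ℝ) : x / √(1 + x ^ 2) ∈ Ioo (-1) 1 := by
  rw [← tanh_arsinh]
  exact ⟨neg_one_lt_tanh _, tanh_lt_one _⟩

theorem hasDerivAt_artanh {x : ℝ} (hx : x ∈ Ioo (-1) 1) :
    HasDerivAt artanh (1 - x ^ 2)⁻¹ x := by
  obtain ⟨h₁, h₂⟩ := hx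
  have hlog : HasDerivAt (fun y => 1 / 2 * (log (1 + y) - log (1 - y)))
      (1 / 2 * (1 / (1 + x) - -1 / (1 - x))) x := by
    have hp := ((hasDerivAt_id x).const_add 1).log (by simp; linarith)
    have hm := ((hasDerivAt_id x).const_sub 1).log (by simp; linarith)
    simpa using (hp.sub hm).const_mul (1 / 2 : ℝ)
  have heq : artanh =ᶠ[𝓝 x] fun y => 1 / 2 * (log (1 + y) - log (1 - y)) := by
    filter_upwards [Ioo_mem_nhds h₁ h₂] with y ⟨hy₁, hy₂⟩
    rw [artanh_eq_half_log ⟨hy₁.le, hy₂.le⟩, log_div (by linarith) (by linarith)]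
  refine (hlog.congr_of_eventuallyEq heq).congr_deriv ?_
  have hp : 1 + x ≠ 0 := by linarith
  have hm : 1 - x ≠ 0 := by linarith
  rw [show 1 - x ^ 2 = (1 + x) * (1 - x) by ring]
  field_simp
  ring

end Real

theorem integral_sq_sub_pow_four_div_one_sub_sq {t : ℝ} (ht : t ∈ Ioo (-1) 1) :
    ∫ z in (0 : ℝ)..t, (z ^ 2 - z ^ 4 / 3) / (1 - z ^ 2) =
      t ^ 3 / 9 - 2 * t / 3 + 2 / 3 * artanh t := by
  have hsub : uIcc 0 t ⊆ Ioo (-1) 1 :=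
    ordConnected_Ioo.uIcc_subset ⟨by norm_num, by norm_num⟩ ht
  have hne : ∀ z ∈ Ioo (-1 : ℝ) 1, 1 - z ^ 2 ≠ 0 := fun z ⟨h₁, h₂⟩ => by nlinarith
  have hderiv : ∀ z ∈ uIcc 0 t, HasDerivAt (fun z => z ^ 3 / 9 - 2 * z / 3 + 2 / 3 * artanh z)
      ((z ^ 2 - z ^ 4 / 3) / (1 - z ^ 2)) z := by
    intro z hz
    have h := (((hasDerivAt_pow 3 z).div_const 9).sub
      (((hasDerivAt_id z).const_mul 2).div_const 3)).add
        ((hasDerivAt_artanh (hsub hz)).const_mul (2 / 3))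
    refine h.congr_deriv ?_
    have := hne z (hsub hz)
    field_simp
    ring
  have hint : IntervalIntegrable (fun z => (z ^ 2 - z ^ 4 / 3) / (1 - z ^ 2))
      MeasureTheory.volume 0 t :=
    (ContinuousOn.div (by fun_prop) (by fun_prop) fun z hz => hne z (hsub hz)).intervalIntegrable
  rw [intervalIntegral.integral_eq_sub_of_hasDerivAt hderiv hint]
  simp

theorem BLambda_eq (Λ : ℝ) :
    BLambda Λ = π⁻¹ * ((Λ / √(1 + Λ ^ 2)) ^ 3 / 9 - 2 * (Λ / √(1 + Λ ^ 2)) / 3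
      + 2 / 3 * arsinh Λ) := by
  rw [BLambda, one_div, integral_sq_sub_pow_four_div_one_sub_sq (div_sqrt_one_add_sq_mem_Ioo Λ),
    artanh_div_sqrt_one_add_sq]

theorem sqrt_one_add_sq_sub_le {x : ℝ} (hx : 0 < x) : √(1 + x ^ 2) - x ≤ (2 * x)⁻¹ := by
  have hs : √(1 + x ^ 2) ^ 2 = 1 + x ^ 2 := sq_sqrt (by positivity)
  have hxs : x ≤ √(1 + x ^ 2) := le_sqrt_of_sq_le (by linarith)
  calc √(1 + x ^ 2) - x = (√(1 + x ^ 2) + x)⁻¹ :=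
        eq_inv_of_mul_eq_one_left (by linear_combination hs)
    _ ≤ (2 * x)⁻¹ := inv_anti₀ (by positivity) (by linarith)

theorem one_sub_div_sqrt_one_add_sq_le {x : ℝ} (hx : 0 < x) :
    1 - x / √(1 + x ^ 2) ≤ x⁻¹ ^ 2 / 2 := by
  have hxs : x ≤ √(1 + x ^ 2) := le_sqrt_of_sq_le (by linarith)
  calc 1 - x / √(1 + x ^ 2) = (√(1 + x ^ 2) - x) / √(1 + x ^ 2) := by field_simp
    _ ≤ (2 * x)⁻¹ / x := div_le_div₀ (by positivity) (sqrt_one_add_sq_sub_le hx) hx hxs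
    _ = x⁻¹ ^ 2 / 2 := by field_simp

theorem arsinh_sub_log_two_mul_mem_Icc {x : ℝ} (hx : 0 < x) :
    arsinh x - log (2 * x) ∈ Icc 0 (x⁻¹ ^ 2 / 4) := by
  have hxs : x ≤ √(1 + x ^ 2) := le_sqrt_of_sq_le (by linarith)
  have hq : 1 ≤ (x + √(1 + x ^ 2)) / (2 * x) := by
    rw [le_div_iff₀ (by positivity)]; linarith
  rw [arsinh, ← log_div (by positivity) (by positivity)]
  refine ⟨log_nonneg hq, (log_le_sub_one_of_pos (by linarith)).trans ?_⟩
  calc (x + √(1 + x ^ 2)) / (2 * x) - 1 = (√(1 + x ^ 2) - x) / (2 * x) := by field_simp; ring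
    _ ≤ (2 * x)⁻¹ / (2 * x) := by gcongr; exact sqrt_one_add_sq_sub_le hx
    _ = x⁻¹ ^ 2 / 4 := by field_simp; ring

theorem BLambda_sub_eq {Λ : ℝ} (hΛ : 0 < Λ) :
    BLambda Λ - ((2 / (3 * π)) * log Λ - 5 / (9 * π) + (2 / (3 * π)) * log 2) =
      π⁻¹ * ((1 - Λ / √(1 + Λ ^ 2)) * (5 - Λ / √(1 + Λ ^ 2) - (Λ / √(1 + Λ ^ 2)) ^ 2) / 9 +
        2 / 3 * (arsinh Λ - log (2 * Λ))) := by
  rw [BLambda_eq, log_mul two_ne_zero hΛ.ne']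
  field_simp
  ring

theorem abs_BLambda_sub_le {Λ : ℝ} (hΛ : 0 < Λ) :
    |BLambda Λ - ((2 / (3 * π)) * log Λ - 5 / (9 * π) + (2 / (3 * π)) * log 2)| ≤
      π⁻¹ * (4 / 9 * Λ⁻¹ ^ 2) := by
  rw [BLambda_sub_eq hΛ, abs_mul, abs_of_pos (inv_pos.2 pi_pos)]
  gcongr
  obtain ⟨-, ht₁⟩ := div_sqrt_one_add_sq_mem_Ioo Λ
  have ht₀ : 0 ≤ Λ / √(1 + Λ ^ 2) := by positivity
  have h₁ := one_sub_div_sqrt_one_add_sq_le hΛ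
  obtain ⟨h₂, h₂'⟩ := arsinh_sub_log_two_mul_mem_Icc hΛ
  generalize Λ / √(1 + Λ ^ 2) = t at *
  have hpoly₀ : 0 ≤ (1 - t) * (5 - t - t ^ 2) := mul_nonneg (by linarith) (by nlinarith)
  have hpoly₁ : 0 ≤ (1 - t) * (t + t ^ 2) := mul_nonneg (by linarith) (by positivity)
  rw [abs_le]
  constructor <;> nlinarith

/-- As `Λ → ∞`, `B_Λ⁰ = (2/(3π)) ln Λ - 5/(9π) + (2/(3π)) ln 2 + O(Λ⁻²)`; in particular
`B_Λ⁰ - (2/(3π)) ln Λ → (2 ln 2)/(3π) - 5/(9π)`. -/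
theorem BLambda_asymptotics :
    (fun Λ : ℝ =>
        BLambda Λ - ((2 / (3 * π)) * Real.log Λ - 5 / (9 * π) + (2 / (3 * π)) * Real.log 2))
      =O[atTop] (fun Λ : ℝ => Λ⁻¹ ^ 2) ∧
    Tendsto (fun Λ : ℝ => BLambda Λ - (2 / (3 * π)) * Real.log Λ) atTop
      (nhds ((2 * Real.log 2) / (3 * π) - 5 / (9 * π))) := by
  have hO : (fun Λ : ℝ =>
        BLambda Λ - ((2 / (3 * π)) * log Λ - 5 / (9 * π) + (2 / (3 * π)) * log 2))
      =O[atTop] (fun Λ : ℝ => Λ⁻¹ ^ 2) := by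
    refine Asymptotics.IsBigO.of_bound (π⁻¹ * (4 / 9)) ?_
    filter_upwards [eventually_gt_atTop 0] with Λ hΛ
    rw [norm_eq_abs, norm_eq_abs, abs_of_pos (by positivity : 0 < Λ⁻¹ ^ 2), mul_assoc]
    exact abs_BLambda_sub_le hΛ
  refine ⟨hO, ?_⟩
  have hinv_sq : Tendsto (fun Λ : ℝ => Λ⁻¹ ^ 2) atTop (𝓝 0) := by
    simpa using (tendsto_inv_atTop_zero (𝕜 := ℝ)).pow 2
  have hlim := (hO.trans_tendsto hinv_sq).add_const ((2 / (3 * π)) * log 2 - 5 / (9 * π))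
  convert hlim using 2 <;> ring
end

section
/- The two expressions for the Uehling multiplier agree: for every k ∈ ℝ³ with k ≠ 0, (|k|²/(4π)) ∫₀¹ (z² - z⁴/3)/(1 + |k|²(1-z²)/4) dz = (12 - 5|k|²)/(9π|k|²) + (√(4+|k|²)/(3π|k|³))(|k|² - 2) ln((√(4+|k|²)+|k|)/(√(4+|k|²)-|k|)). -/
open Real

/-!
Writing `b = √(4 + t²) / t` for `t = ‖k‖`, the denominator factors as
`1 + t²(1 - z²)/4 = t²(b² - z²)/4`. Polynomial division of `z² - z⁴/3` by `b² - z²` leaves a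
multiple of `1/(b² - z²)`, whose primitive is `(log (b + z) - log (b - z)) / (2b)`; since `b > 1`
everything is smooth on `[0, 1]`, and the fundamental theorem of calculus gives the closed form.
-/

lemma hasDerivAt_log_add_sub_log_sub {b z : ℝ} (hz : |z| < b) :
    HasDerivAt (fun z => log (b + z) - log (b - z)) (2 * b / (b ^ 2 - z ^ 2)) z := by
  obtain ⟨hlo, hhi⟩ := abs_lt.mp hz
  have hplus : b + z ≠ 0 := by linarith
  have hminus : b - z ≠ 0 := by linarith
  have hadd : HasDerivAt (fun z => log (b + z)) (1 / (b + z)) z := by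
    simpa using ((hasDerivAt_id' z).const_add b).log hplus
  have hsub : HasDerivAt (fun z => log (b - z)) (-1 / (b - z)) z := by
    simpa using ((hasDerivAt_id' z).const_sub b).log hminus
  refine (hadd.sub hsub).congr_deriv ?_
  rw [show b ^ 2 - z ^ 2 = (b + z) * (b - z) by ring]
  field_simp
  ring

lemma integral_quartic_div_sq_sub_sq {b : ℝ} (hb : 1 < b) :
    ∫ z in (0 : ℝ)..1, (z ^ 2 - z ^ 4 / 3) / (b ^ 2 - z ^ 2) =
      (3 * b ^ 2 - 8) / 9 - b * (b ^ 2 - 3) / 6 * log ((b + 1) / (b - 1)) := by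
  have hz : ∀ z ∈ Set.uIcc (0 : ℝ) 1, |z| < b := fun z hz => by
    rw [Set.uIcc_of_le zero_le_one] at hz
    rw [abs_of_nonneg hz.1]
    linarith [hz.2]
  have hne : ∀ z ∈ Set.uIcc (0 : ℝ) 1, b ^ 2 - z ^ 2 ≠ 0 := fun z hz' => by
    nlinarith [abs_nonneg z, sq_abs z, hz z hz']
  have hderiv : ∀ z ∈ Set.uIcc (0 : ℝ) 1,
      HasDerivAt (fun z => z ^ 3 / 9 + (b ^ 2 - 3) / 3 * z -
        b * (b ^ 2 - 3) / 6 * (log (b + z) - log (b - z)))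
        ((z ^ 2 - z ^ 4 / 3) / (b ^ 2 - z ^ 2)) z := fun z hz' => by
    have hpoly : HasDerivAt (fun z : ℝ => z ^ 3 / 9 + (b ^ 2 - 3) / 3 * z)
        (z ^ 2 / 3 + (b ^ 2 - 3) / 3) z := by
      refine (((hasDerivAt_pow 3 z).div_const 9).add
        ((hasDerivAt_id' z).const_mul ((b ^ 2 - 3) / 3))).congr_deriv ?_
      ring
    refine (hpoly.sub ((hasDerivAt_log_add_sub_log_sub (hz z hz')).const_mul
      (b * (b ^ 2 - 3) / 6))).congr_deriv ?_
    have := hne z hz'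
    field_simp
    ring
  have hint : IntervalIntegrable (fun z : ℝ => (z ^ 2 - z ^ 4 / 3) / (b ^ 2 - z ^ 2))
      MeasureTheory.volume 0 1 :=
    (ContinuousOn.div (by fun_prop) (by fun_prop) hne).intervalIntegrable
  rw [intervalIntegral.integral_eq_sub_of_hasDerivAt hderiv hint,
    ← log_div (by linarith) (by linarith)]
  norm_num
  ring

lemma uehling_integral_eq {t : ℝ} (ht : 0 < t) :
    (t ^ 2 / (4 * π)) * (∫ z in (0 : ℝ)..1, (z ^ 2 - z ^ 4 / 3) / (1 + t ^ 2 * (1 - z ^ 2) / 4)) =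
      (12 - 5 * t ^ 2) / (9 * π * t ^ 2) +
        (√(4 + t ^ 2) / (3 * π * t ^ 3)) * (t ^ 2 - 2) *
          log ((√(4 + t ^ 2) + t) / (√(4 + t ^ 2) - t)) := by
  set s := √(4 + t ^ 2)
  have hs2 : s ^ 2 = 4 + t ^ 2 := sq_sqrt (by positivity)
  have hts : t < s := by nlinarith [sqrt_nonneg (4 + t ^ 2)]
  have hb : 1 < s / t := (one_lt_div ht).mpr hts
  have hdenom : ∀ z : ℝ, 1 + t ^ 2 * (1 - z ^ 2) / 4 = t ^ 2 / 4 * ((s / t) ^ 2 - z ^ 2) := by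
    intro z
    field_simp
    linear_combination -hs2
  have hratio : (s / t + 1) / (s / t - 1) = (s + t) / (s - t) := by
    rw [div_add_one ht.ne', div_sub_one ht.ne', div_div_div_cancel_right₀ ht.ne']
  simp_rw [hdenom, div_mul_eq_div_div_swap, intervalIntegral.integral_div,
    integral_quartic_div_sq_sub_sq hb, hratio]
  field_simp
  rw [hs2]
  ring

/-- The two expressions for the Uehling multiplier agree for `k ≠ 0`. -/
theorem uehling_closed_form (k : EuclideanSpace ℝ (Fin 3)) (hk : k ≠ 0) :
    (‖k‖ ^ 2 / (4 * π)) *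
        (∫ z in (0 : ℝ)..1, (z ^ 2 - z ^ 4 / 3) / (1 + ‖k‖ ^ 2 * (1 - z ^ 2) / 4)) =
      (12 - 5 * ‖k‖ ^ 2) / (9 * π * ‖k‖ ^ 2) +
        (Real.sqrt (4 + ‖k‖ ^ 2) / (3 * π * ‖k‖ ^ 3)) * (‖k‖ ^ 2 - 2) *
          Real.log ((Real.sqrt (4 + ‖k‖ ^ 2) + ‖k‖) / (Real.sqrt (4 + ‖k‖ ^ 2) - ‖k‖)) :=
  uehling_integral_eq (norm_pos_iff.mpr hk)
end

section
/- For each fixed u ∈ (0,1) and k ∈ ℝ³, the quantity -Σⱼ₌₀² cⱼ log(mⱼ² + u(1-u)|k|²) is a strictly decreasing function of |k|² when the cⱼ satisfy the Pauli-Villars conditions; consequently M(k) ≤ M(0) for all k ∈ ℝ³. -/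
open Real Set

/-- The Pauli–Villars multiplier `M(k)`. -/
noncomputable def pvM (c m : Fin 3 → ℝ) (k : EuclideanSpace ℝ (Fin 3)) : ℝ :=
  -(2 / π) * ∑ j : Fin 3, c j *
    ∫ u in (0 : ℝ)..1, u * (1 - u) * Real.log ((m j) ^ 2 + u * (1 - u) * ‖k‖ ^ 2)

/-!
Writing `aⱼ = mⱼ²`, the function `F(s) = -∑ⱼ cⱼ log (aⱼ + s)` has derivative
`-∑ⱼ cⱼ / (aⱼ + s)`, and for the Pauli–Villars weights this sum equals
`(a₁ - a₀)(a₂ - a₀) / ∏ⱼ (aⱼ + s) > 0`. So `F` is strictly decreasing on `[0, ∞)`.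
Since `M(k) = (2/π) ∫₀¹ u(1-u) F(u(1-u)|k|²) du` and `u(1-u) ≥ 0` on `[0, 1]`,
the integrand is pointwise at most its value at `k = 0`.
-/

section WeightedLogSum

variable {ι : Type*} [Fintype ι]

noncomputable def negWeightedLogSum (c a : ι → ℝ) (s : ℝ) : ℝ :=
  -∑ j, c j * log (a j + s)

theorem hasDerivAt_negWeightedLogSum {c a : ι → ℝ} {s : ℝ} (h : ∀ j, 0 < a j + s) :
    HasDerivAt (negWeightedLogSum c a) (-∑ j, c j / (a j + s)) s := by
  have hterm : ∀ j ∈ Finset.univ,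
      HasDerivAt (fun s => c j * log (a j + s)) (c j / (a j + s)) s := fun j _ => by
    simpa [div_eq_mul_inv] using
      (((hasDerivAt_id s).const_add (a j)).log (h j).ne').const_mul (c j)
  exact (HasDerivAt.fun_sum hterm).neg

theorem continuousOn_negWeightedLogSum {c a : ι → ℝ} (ha : ∀ j, 0 < a j) :
    ContinuousOn (negWeightedLogSum c a) (Ici 0) := fun _ hs =>
  (hasDerivAt_negWeightedLogSum fun j => add_pos_of_pos_of_nonneg (ha j) hs).continuousAt
    |>.continuousWithinAt

theorem strictAntiOn_negWeightedLogSum {c a : ι → ℝ} (ha : ∀ j, 0 < a j)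
    (hpos : ∀ s, 0 < s → 0 < ∑ j, c j / (a j + s)) :
    StrictAntiOn (negWeightedLogSum c a) (Ici 0) := by
  refine strictAntiOn_of_deriv_neg (convex_Ici 0) (continuousOn_negWeightedLogSum ha) ?_
  intro s hs
  rw [interior_Ici, mem_Ioi] at hs
  rw [(hasDerivAt_negWeightedLogSum fun j => (ha j).trans (lt_add_of_pos_right _ hs)).deriv]
  exact neg_neg_of_pos (hpos s hs)

end WeightedLogSum

section PauliVillars

variable {c a : Fin 3 → ℝ}

theorem sum_pauliVillars_div_pos (hc0 : c 0 = 1)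
    (hc1 : c 1 = (a 0 - a 2) / (a 2 - a 1)) (hc2 : c 2 = (a 1 - a 0) / (a 2 - a 1))
    (h01 : a 0 < a 1) (h12 : a 1 < a 2) {s : ℝ} (hs : 0 < a 0 + s) :
    0 < ∑ j, c j / (a j + s) := by
  have h1 : 0 < a 1 + s := by linarith
  have h2 : 0 < a 2 + s := by linarith
  have hsum : ∑ j, c j / (a j + s)
      = (a 1 - a 0) * (a 2 - a 0) / ((a 0 + s) * (a 1 + s) * (a 2 + s)) := by
    rw [Fin.sum_univ_three, hc0, hc1, hc2]
    field_simp [(sub_pos.2 h12).ne']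
    ring
  rw [hsum]
  exact div_pos (mul_pos (by linarith) (by linarith)) (by positivity)

theorem strictAntiOn_negWeightedLogSum_pauliVillars (hc0 : c 0 = 1)
    (hc1 : c 1 = (a 0 - a 2) / (a 2 - a 1)) (hc2 : c 2 = (a 1 - a 0) / (a 2 - a 1))
    (ha0 : 0 < a 0) (h01 : a 0 < a 1) (h12 : a 1 < a 2) :
    StrictAntiOn (negWeightedLogSum c a) (Ici 0) := by
  have ha : ∀ j, 0 < a j := by
    intro j
    fin_cases j
    exacts [ha0, ha0.trans h01, (ha0.trans h01).trans h12]
  exact strictAntiOn_negWeightedLogSum ha fun s hs =>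
    sum_pauliVillars_div_pos hc0 hc1 hc2 h01 h12 (by linarith)

end PauliVillars

section Multiplier

theorem continuousOn_log_add_mul_one_sub {a t : ℝ} (ha : 0 < a) (ht : 0 ≤ t) :
    ContinuousOn (fun u => log (a + u * (1 - u) * t)) (Icc 0 1) := by
  refine ContinuousOn.log (by fun_prop) fun u hu => ?_
  have : 0 ≤ u * (1 - u) * t := mul_nonneg (mul_nonneg hu.1 (sub_nonneg.2 hu.2)) ht
  positivity

theorem pvM_eq_integral_negWeightedLogSum (c : Fin 3 → ℝ) {m : Fin 3 → ℝ}
    (hm : ∀ j, m j ≠ 0) (k : EuclideanSpace ℝ (Fin 3)) :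
    pvM c m k = 2 / π * ∫ u in (0 : ℝ)..1,
      u * (1 - u) * negWeightedLogSum c (fun j => m j ^ 2) (u * (1 - u) * ‖k‖ ^ 2) := by
  have hint : ∀ j ∈ Finset.univ, IntervalIntegrable
      (fun u => c j * (u * (1 - u) * log (m j ^ 2 + u * (1 - u) * ‖k‖ ^ 2)))
      MeasureTheory.volume 0 1 := by
    intro j _
    have := hm j
    refine ContinuousOn.intervalIntegrable ?_
    rw [uIcc_of_le zero_le_one]
    exact continuousOn_const.mul ((by fun_prop : ContinuousOn (fun u : ℝ => u * (1 - u)) _).mul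
      (continuousOn_log_add_mul_one_sub (by positivity) (by positivity)))
  calc pvM c m k
      = -(2 / π) * ∫ u in (0 : ℝ)..1,
          ∑ j, c j * (u * (1 - u) * log (m j ^ 2 + u * (1 - u) * ‖k‖ ^ 2)) := by
        simp only [pvM, intervalIntegral.integral_finsetSum hint,
          intervalIntegral.integral_const_mul]
    _ = _ := by
        rw [neg_mul, ← mul_neg, ← intervalIntegral.integral_neg]
        congr 1
        refine intervalIntegral.integral_congr fun u _ => ?_
        simp only [negWeightedLogSum, mul_neg, Finset.mul_sum]
        congr 1
        exact Finset.sum_congr rfl fun j _ => by ring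

theorem intervalIntegrable_mul_one_sub_mul_comp {F : ℝ → ℝ} (hF : ContinuousOn F (Ici 0))
    {t : ℝ} (ht : 0 ≤ t) :
    IntervalIntegrable (fun u => u * (1 - u) * F (u * (1 - u) * t)) MeasureTheory.volume 0 1 := by
  refine ContinuousOn.intervalIntegrable ?_
  rw [uIcc_of_le zero_le_one]
  refine ContinuousOn.mul (by fun_prop) (hF.comp (by fun_prop) fun u hu => ?_)
  exact mul_nonneg (mul_nonneg hu.1 (sub_nonneg.2 hu.2)) ht

theorem pvM_le_pvM_zero (c : Fin 3 → ℝ) {m : Fin 3 → ℝ} (hm : ∀ j, m j ≠ 0)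
    (hF : AntitoneOn (negWeightedLogSum c (fun j => m j ^ 2)) (Ici 0))
    (k : EuclideanSpace ℝ (Fin 3)) : pvM c m k ≤ pvM c m 0 := by
  have hcont : ContinuousOn (negWeightedLogSum c (fun j => m j ^ 2)) (Ici 0) :=
    continuousOn_negWeightedLogSum fun j => by have := hm j; positivity
  rw [pvM_eq_integral_negWeightedLogSum c hm k, pvM_eq_integral_negWeightedLogSum c hm 0]
  refine mul_le_mul_of_nonneg_left (intervalIntegral.integral_mono_on zero_le_one
    (intervalIntegrable_mul_one_sub_mul_comp hcont (by positivity))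
    (intervalIntegrable_mul_one_sub_mul_comp hcont (by positivity)) fun u hu => ?_)
    (by positivity)
  have hw : 0 ≤ u * (1 - u) := mul_nonneg hu.1 (sub_nonneg.2 hu.2)
  have hs : 0 ≤ u * (1 - u) * ‖k‖ ^ 2 := mul_nonneg hw (sq_nonneg _)
  exact mul_le_mul_of_nonneg_left (hF (by simp) hs (by simpa using hs)) hw

end Multiplier

theorem pvM_monotonicity_and_bound (c m : Fin 3 → ℝ)
    (hc0 : c 0 = 1)
    (hc1 : c 1 = ((m 0) ^ 2 - (m 2) ^ 2) / ((m 2) ^ 2 - (m 1) ^ 2))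
    (hc2 : c 2 = ((m 1) ^ 2 - (m 0) ^ 2) / ((m 2) ^ 2 - (m 1) ^ 2))
    (hm0 : 0 < m 0) (hm01 : m 0 < m 1) (hm12 : m 1 < m 2) :
    (∀ u : ℝ, u ∈ Ioo (0 : ℝ) 1 →
      StrictAntiOn (fun t : ℝ =>
        -∑ j : Fin 3, c j * Real.log ((m j) ^ 2 + u * (1 - u) * t)) (Ici 0)) ∧
    (∀ k : EuclideanSpace ℝ (Fin 3), pvM c m k ≤ pvM c m 0) := by
  have hm : ∀ j, 0 < m j := by
    intro j
    fin_cases j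
    exacts [hm0, hm0.trans hm01, (hm0.trans hm01).trans hm12]
  have hF : StrictAntiOn (negWeightedLogSum c fun j => m j ^ 2) (Ici 0) :=
    strictAntiOn_negWeightedLogSum_pauliVillars hc0 hc1 hc2 (by positivity)
      (pow_lt_pow_left₀ hm01 hm0.le two_ne_zero) (pow_lt_pow_left₀ hm12 (hm 1).le two_ne_zero)
  refine ⟨fun u hu s hs t ht hst => ?_, pvM_le_pvM_zero c (fun j => (hm j).ne') hF.antitoneOn⟩
  have hw : 0 < u * (1 - u) := mul_pos hu.1 (sub_pos.2 hu.2)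
  exact hF (mul_nonneg hw.le hs) (mul_nonneg hw.le ht) (mul_lt_mul_of_pos_left hst hw)
end

section
/- With f(t) = -Σⱼ₌₀² cⱼ log(mⱼ² + t) under the Pauli-Villars conditions, one has f'(t) = -Σⱼ cⱼ/(mⱼ² + t) < 0 for all t ≥ 0. -/
open Real Set

theorem hasDerivAt_sum_mul_log_add {ι : Type*} [Fintype ι] (c a : ι → ℝ) {t : ℝ}
    (h : ∀ j, a j + t ≠ 0) :
    HasDerivAt (fun s : ℝ => ∑ j, c j * Real.log (a j + s)) (∑ j, c j / (a j + t)) t := by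
  refine HasDerivAt.fun_sum fun j _ => ?_
  have hlog : HasDerivAt (fun s : ℝ => Real.log (a j + s)) (1 / (a j + t)) t := by
    simpa using ((hasDerivAt_id t).const_add (a j)).log (h j)
  simpa only [mul_one_div] using hlog.const_mul (c j)

theorem pauliVillars_sum_eq {a b d t : ℝ} (ha : a + t ≠ 0) (hb : b + t ≠ 0) (hd : d + t ≠ 0)
    (hbd : b ≠ d) :
    1 / (a + t) + (a - d) / (d - b) / (b + t) + (b - a) / (d - b) / (d + t) =
      (b - a) * (d - a) / ((a + t) * (b + t) * (d + t)) := by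
  have hdb : d - b ≠ 0 := sub_ne_zero.mpr hbd.symm
  field_simp
  ring

theorem pauliVillars_sum_pos {a b d t : ℝ} (ha : 0 < a + t) (hab : a < b) (hbd : b < d) :
    0 < 1 / (a + t) + (a - d) / (d - b) / (b + t) + (b - a) / (d - b) / (d + t) := by
  have hb : 0 < b + t := by linarith
  have hd : 0 < d + t := by linarith
  rw [pauliVillars_sum_eq ha.ne' hb.ne' hd.ne' hbd.ne]
  have hba : 0 < b - a := sub_pos.mpr hab
  have hda : 0 < d - a := by linarith
  positivity

/-- Under the Pauli–Villars conditions, `f(t) = -Σⱼ cⱼ log(mⱼ² + t)` has derivative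
`-Σⱼ cⱼ/(mⱼ² + t)`, which is strictly negative for `t ≥ 0`. -/
theorem pauliVillars_deriv_neg (c m : Fin 3 → ℝ)
    (hc0 : c 0 = 1)
    (hc1 : c 1 = ((m 0) ^ 2 - (m 2) ^ 2) / ((m 2) ^ 2 - (m 1) ^ 2))
    (hc2 : c 2 = ((m 1) ^ 2 - (m 0) ^ 2) / ((m 2) ^ 2 - (m 1) ^ 2))
    (hm0 : 0 < m 0) (hm01 : m 0 < m 1) (hm12 : m 1 < m 2) (t : ℝ) (ht : 0 ≤ t) :
    HasDerivAt (fun s : ℝ => -∑ j : Fin 3, c j * Real.log ((m j) ^ 2 + s))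
      (-∑ j : Fin 3, c j / ((m j) ^ 2 + t)) t ∧
    -∑ j : Fin 3, c j / ((m j) ^ 2 + t) < 0 := by
  have hsq01 : m 0 ^ 2 < m 1 ^ 2 := pow_lt_pow_left₀ hm01 hm0.le two_ne_zero
  have hsq12 : m 1 ^ 2 < m 2 ^ 2 := pow_lt_pow_left₀ hm12 (hm0.trans hm01).le two_ne_zero
  have hpos0 : 0 < m 0 ^ 2 + t := by positivity
  have hpos : ∀ j, m j ^ 2 + t ≠ 0 := by
    intro j
    fin_cases j <;> simp only [Fin.zero_eta, Fin.mk_one, Fin.reduceFinMk] <;> linarith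
  refine ⟨(hasDerivAt_sum_mul_log_add c (fun j => m j ^ 2) hpos).neg, ?_⟩
  have hsum := pauliVillars_sum_pos hpos0 hsq01 hsq12
  rw [Fin.sum_univ_three, hc0, hc1, hc2]
  linarith
end
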